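/- Every finite tree with maximum degree at most n ≥ 2 that contains no path on 6 vertices as a subgraph has at most n² + 1 vertices. Moreover, this bound is attained by the tree t_n consisting of a root of degree n each of whose neighbors has n − 1 additional leaf children. -/

import Mathlib

/-!
In a tree every path is a geodesic, so a tree without a path on 6 vertices has all paths of
length at most 4. A vertex `c` of minimal eccentricity then has eccentricity at most 2: otherwise
the path from `c` to a farthest vertex, continued through `c` towards a vertex far from the first
step, has length at least `2 ecc(c) - 1 ≥ 5`. Every vertex is then `c`, a neighbour `u` of `c`, or
a neighbour of such a `u` other than `c`, which gives at most `1 + n · n` vertices.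

For the extremal tree, the root is at distance at most 2 from every vertex, so by the same
geodesic argument no path has length 5.
-/

namespace SimpleGraph

variable {V : Type*} {G : SimpleGraph V}

lemma Walk.IsPath.exists_injective_pathGraph_hom {u v : V} {p : G.Walk u v} (hp : p.IsPath)
    {k : ℕ} (hk : k ≤ p.length) : ∃ f : pathGraph (k + 1) →g G, Function.Injective f := by
  refine ⟨⟨fun i => p.getVert i, fun {i j} hij => ?_⟩, fun i j hij => ?_⟩
  · rcases pathGraph_adj.mp hij with h | h
    · rw [← h]
      exact p.adj_getVert_succ (by omega)
    · rw [← h]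
      exact (p.adj_getVert_succ (by omega)).symm
  · exact Fin.ext (hp.getVert_injOn (by simp; omega) (by simp; omega) hij)

lemma exists_isPath_of_injective_pathGraph_hom {k : ℕ} {f : pathGraph (k + 1) →g G}
    (hf : Function.Injective f) : ∃ (u v : V) (p : G.Walk u v), p.IsPath ∧ p.length = k := by
  suffices h : ∀ m (hm : m < k + 1), ∃ p : G.Walk (f 0) (f ⟨m, hm⟩), p.IsPath ∧
      p.length = m ∧ ∀ w ∈ p.support, ∃ i : Fin (k + 1), i.val ≤ m ∧ f i = w from
    let ⟨p, hp, hl, _⟩ := h k k.lt_succ_self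
    ⟨_, _, p, hp, hl⟩
  intro m hm
  induction m with
  | zero => exact ⟨Walk.nil, by simp, rfl, by simp⟩
  | succ m ih =>
    obtain ⟨p, hp, hl, hsupp⟩ := ih (by omega)
    have hadj : G.Adj (f ⟨m, by omega⟩) (f ⟨m + 1, hm⟩) :=
      f.map_adj (pathGraph_adj.mpr (Or.inl rfl))
    have hnew : f ⟨m + 1, hm⟩ ∉ p.support := fun h => by
      obtain ⟨i, hi, hfi⟩ := hsupp _ h
      have := congrArg Fin.val (hf hfi)
      simp at this
      omega
    refine ⟨p.concat hadj, hp.concat hnew hadj, by simp [hl], fun w hw => ?_⟩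
    simp only [Walk.support_concat, List.mem_append, List.mem_singleton] at hw
    rcases hw with hw | rfl
    · obtain ⟨i, hi, hfi⟩ := hsupp w hw
      exact ⟨i, by omega, hfi⟩
    · exact ⟨_, le_rfl, rfl⟩

lemma IsAcyclic.isPath_reverse_append (hG : G.IsAcyclic) {c u v : V} {p : G.Walk c u}
    {q : G.Walk c v} (hp : p.IsPath) (hq : q.IsPath) (hpq : p.snd ≠ q.snd) :
    (p.reverse.append q).IsPath := by
  classical
  rw [Walk.isPath_def, Walk.support_append, Walk.support_reverse, List.nodup_append]
  have hqs := hq.support_nodup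
  rw [← q.cons_tail_support, List.nodup_cons] at hqs
  refine ⟨List.nodup_reverse.mpr hp.support_nodup, hqs.2, ?_⟩
  rintro x hxp _ hxq rfl
  rw [List.mem_reverse] at hxp
  have hxc : x ≠ c := fun h => hqs.1 (h ▸ hxq)
  have hxq' : x ∈ q.support := q.cons_tail_support ▸ List.mem_cons_of_mem _ hxq
  have := (hG.subsingleton_path c x).elim ⟨_, hp.takeUntil hxp⟩ ⟨_, hq.takeUntil hxq'⟩
  apply hpq
  rw [← Walk.snd_takeUntil hxc p hxp, ← Walk.snd_takeUntil hxc q hxq', Subtype.mk.inj this]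

lemma IsTree.length_eq_dist (hT : G.IsTree) {u v : V} {p : G.Walk u v} (hp : p.IsPath) :
    p.length = G.dist u v := by
  obtain ⟨q, hq, hql⟩ := hT.connected.exists_path_of_dist u v
  rw [← hql, Subtype.mk.inj ((hT.isAcyclic.subsingleton_path u v).elim ⟨p, hp⟩ ⟨q, hq⟩)]

lemma IsTree.length_le_of_forall_dist_le (hT : G.IsTree) {c : V} {k : ℕ}
    (hc : ∀ v, G.dist c v ≤ k) {u v : V} {p : G.Walk u v} (hp : p.IsPath) :
    p.length ≤ 2 * k := by
  rw [hT.length_eq_dist hp]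
  calc G.dist u v ≤ G.dist u c + G.dist c v := hT.connected.dist_triangle
    _ ≤ 2 * k := by rw [dist_comm]; linarith [hc u, hc v]

lemma IsTree.exists_forall_dist_le [Fintype V] (hT : G.IsTree) {k : ℕ}
    (hlen : ∀ ⦃u v : V⦄ (p : G.Walk u v), p.IsPath → p.length ≤ 2 * k) :
    ∃ c, ∀ v, G.dist c v ≤ k := by
  have : Nonempty V := hT.connected.nonempty
  let ecc (c : V) : ℕ := Finset.univ.sup (G.dist c)
  have le_ecc (c v : V) : G.dist c v ≤ ecc c := Finset.le_sup (Finset.mem_univ v)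
  have exists_eq_ecc (c : V) : ∃ v, G.dist c v = ecc c := by
    obtain ⟨v, -, hv⟩ := Finset.exists_mem_eq_sup _ Finset.univ_nonempty (G.dist c)
    exact ⟨v, hv.symm⟩
  obtain ⟨c, -, hmin⟩ := Finset.exists_min_image Finset.univ ecc Finset.univ_nonempty
  refine ⟨c, fun x => (le_ecc c x).trans (not_lt.mp fun hk => ?_)⟩
  -- By minimality, the first step `p.snd` from `c` towards a farthest vertex `v` has a vertex `w`
  -- at distance `≥ ecc c`; the path from `c` to `w` avoids `p.snd`, so joining it to `p` gives
  -- a path of length `≥ 2 * ecc c - 1 > 2 * k`.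
  obtain ⟨v, hv⟩ := exists_eq_ecc c
  obtain ⟨p, hp, hpl⟩ := hT.connected.exists_path_of_dist c v
  have hpnil : ¬ p.Nil := by rw [← Walk.length_eq_zero_iff]; omega
  obtain ⟨w, hw⟩ := exists_eq_ecc p.snd
  have hecc : ecc c ≤ ecc p.snd := hmin _ (Finset.mem_univ _)
  obtain ⟨q, hq, hql⟩ := hT.connected.exists_path_of_dist c w
  have hsnd : p.snd ≠ q.snd := by
    intro h
    have hshort : G.dist p.snd w ≤ G.dist c w - 1 := by
      rw [h, ← hql, ← q.length_tail]
      exact dist_le q.tail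
    have := le_ecc c w
    omega
  have htri : G.dist p.snd w ≤ 1 + G.dist c w := by
    calc G.dist p.snd w ≤ G.dist p.snd c + G.dist c w := hT.connected.dist_triangle
      _ = 1 + G.dist c w := by rw [dist_eq_one_iff_adj.mpr (p.adj_snd hpnil).symm]
  have := hlen _ (hT.isAcyclic.isPath_reverse_append hp hq hsnd)
  rw [Walk.length_append, Walk.length_reverse] at this
  omega

lemma Connected.card_le_of_forall_dist_le_two [Fintype V] (hG : G.Connected) {n : ℕ}
    (hdeg : ∀ v, (G.neighborSet v).ncard ≤ n) {c : V} (hc : ∀ v, G.dist c v ≤ 2) :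
    Fintype.card V ≤ n ^ 2 + 1 := by
  classical
  have hdeg' (v : V) : (G.neighborFinset v).card ≤ n := by
    rw [neighborFinset_def, ← Set.ncard_eq_toFinset_card']
    exact hdeg v
  let ball :=
    insert c ((G.neighborFinset c).biUnion fun u => insert u ((G.neighborFinset u).erase c))
  have hcover : Finset.univ ⊆ ball := by
    intro v _
    by_cases hvc : v = c
    · simp [ball, hvc]
    refine Finset.mem_insert_of_mem (Finset.mem_biUnion.mpr ?_)
    obtain ⟨p, -, hpl⟩ := hG.exists_path_of_dist c v
    match p, hpl ▸ hc v with
    | .nil, _ => exact absurd rfl hvc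
    | .cons h .nil, _ => exact ⟨v, by simpa using h, Finset.mem_insert_self _ _⟩
    | .cons h (.cons h' .nil), _ => exact ⟨_, by simpa using h, by simp [h', hvc]⟩
    | .cons _ (.cons _ (.cons _ _)), h => simp at h
  calc Fintype.card V ≤ ball.card := Finset.card_le_card hcover
    _ ≤ ∑ u ∈ G.neighborFinset c, (insert u ((G.neighborFinset u).erase c)).card + 1 :=
        (Finset.card_insert_le _ _).trans (by gcongr; exact Finset.card_biUnion_le)
    _ ≤ ∑ u ∈ G.neighborFinset c, n + 1 := by
        gcongr with u hu
        have hcu : c ∈ G.neighborFinset u := by simpa [adj_comm] using hu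
        have := Finset.card_erase_add_one hcu
        have := hdeg' u
        have := Finset.card_insert_le u ((G.neighborFinset u).erase c)
        omega
    _ ≤ n ^ 2 + 1 := by
        rw [Finset.sum_const, smul_eq_mul, sq]
        gcongr
        exact hdeg' c

section ParentGraph

variable {V : Type*} {parent : V → V} {rank : V → ℕ} {r : V}

def parentGraph (parent : V → V) : SimpleGraph V := .fromRel fun u v => u = parent v

lemma parentGraph_adj {u v : V} :
    (parentGraph parent).Adj u v ↔ u ≠ v ∧ (u = parent v ∨ v = parent u) :=
  fromRel_adj ..

lemma exists_parentGraph_walk_length_le_rank (hrank : ∀ v, v ≠ r → rank (parent v) < rank v)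
    (v : V) :
    ∃ p : (parentGraph parent).Walk v r, p.length ≤ rank v := by
  by_cases hv : v = r
  · subst hv
    exact ⟨.nil, Nat.zero_le _⟩
  have hlt := hrank v hv
  have hadj : (parentGraph parent).Adj v (parent v) :=
    parentGraph_adj.mpr ⟨fun h => by rw [← h] at hlt; omega, Or.inr rfl⟩
  obtain ⟨p, hp⟩ := exists_parentGraph_walk_length_le_rank hrank (parent v)
  exact ⟨.cons hadj p, by simp only [Walk.length_cons]; omega⟩
termination_by rank v
decreasing_by exact hlt

lemma dist_parentGraph_le_rank (hrank : ∀ v, v ≠ r → rank (parent v) < rank v) (v : V) :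
    (parentGraph parent).dist r v ≤ rank v := by
  obtain ⟨p, hp⟩ := exists_parentGraph_walk_length_le_rank hrank v
  rw [dist_comm]
  exact (dist_le p).trans hp

lemma isTree_parentGraph [Finite V] (hr : parent r = r)
    (hrank : ∀ v, v ≠ r → rank (parent v) < rank v) : (parentGraph parent).IsTree := by
  classical
  rw [isTree_iff_connected_and_card]
  refine ⟨(connected_iff_exists_forall_reachable _).mpr ⟨r, fun v =>
    (exists_parentGraph_walk_length_le_rank hrank v).elim fun p _ => p.reachable.symm⟩, ?_⟩
  have hadj (v : V) (hv : v ≠ r) : (parentGraph parent).Adj v (parent v) :=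
    parentGraph_adj.mpr ⟨fun h => by have := hrank v hv; rw [← h] at this; omega, Or.inr rfl⟩
  -- Edges correspond to non-root vertices, each joined to its parent.
  let toEdge (v : {v // v ≠ r}) : (parentGraph parent).edgeSet := ⟨s(v, parent v), hadj v v.2⟩
  have hbij : Function.Bijective toEdge := by
    refine ⟨fun ⟨v, hv⟩ ⟨w, hw⟩ hvw => ?_, fun ⟨e, he⟩ => ?_⟩
    · have hvw := congrArg Subtype.val hvw
      simp only [toEdge, Sym2.eq_iff] at hvw
      rcases hvw with ⟨h, -⟩ | ⟨hvw, hwv⟩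
      · exact Subtype.ext h
      · have := hrank v hv
        have := hrank w hw
        rw [← hvw, ← hwv] at *
        omega
    · induction e using Sym2.ind with
      | _ u v =>
        obtain ⟨huv, rfl | rfl⟩ := parentGraph_adj.mp ((mem_edgeSet _).mp he)
        · exact ⟨⟨v, fun hv => huv (by rw [hv, hr])⟩, Subtype.ext Sym2.eq_swap⟩
        · exact ⟨⟨u, fun hu => huv (by rw [hu, hr])⟩, rfl⟩
  rw [← Nat.card_congr (Equiv.ofBijective toEdge hbij), ← Finite.card_option,
    Nat.card_congr (Equiv.optionSubtypeNe r)]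

end ParentGraph

section StarOfStars

variable {n : ℕ}

/-- The tree `t_n` on `Option (Fin n × Fin n)`: `none` is the root, `some (i, i)` its `i`-th
child, and `some (i, j)` with `j ≠ i` a leaf below `some (i, i)`. -/
def starOfStarsParent : Option (Fin n × Fin n) → Option (Fin n × Fin n)
  | none => none
  | some (i, j) => if i = j then none else some (i, i)

def starOfStarsDepth : Option (Fin n × Fin n) → ℕ
  | none => 0
  | some (i, j) => if i = j then 1 else 2

variable (n) in
def starOfStars : SimpleGraph (Option (Fin n × Fin n)) := parentGraph starOfStarsParent

lemma starOfStarsDepth_parent_lt : ∀ v : Option (Fin n × Fin n), v ≠ none →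
    starOfStarsDepth (starOfStarsParent v) < starOfStarsDepth v
  | none, h => absurd rfl h
  | some (i, j), _ => by by_cases hij : i = j <;> simp [starOfStarsParent, starOfStarsDepth, hij]

variable (n) in
lemma isTree_starOfStars : (starOfStars n).IsTree :=
  isTree_parentGraph rfl starOfStarsDepth_parent_lt

lemma dist_none_starOfStars_le (v : Option (Fin n × Fin n)) :
    (starOfStars n).dist none v ≤ 2 := by
  refine (dist_parentGraph_le_rank starOfStarsDepth_parent_lt v).trans ?_
  rcases v with _ | ⟨i, j⟩
  · simp [starOfStarsDepth]
  · by_cases hij : i = j <;> simp [starOfStarsDepth, hij]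

lemma neighborSet_starOfStars_none :
    (starOfStars n).neighborSet none = Set.range fun i => some (i, i) := by
  ext (_ | ⟨i, j⟩) <;> simp [starOfStars, parentGraph_adj, starOfStarsParent]

lemma neighborSet_starOfStars_hub (i : Fin n) :
    (starOfStars n).neighborSet (some (i, i)) =
      Set.range fun j => if j = i then none else some (i, j) := by
  ext (_ | ⟨k, j⟩) <;> simp [starOfStars, parentGraph_adj, starOfStarsParent]
  grind

lemma neighborSet_starOfStars_leaf {i j : Fin n} (hij : i ≠ j) :
    (starOfStars n).neighborSet (some (i, j)) = {some (i, i)} := by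
  ext (_ | ⟨k, l⟩) <;> simp [starOfStars, parentGraph_adj, starOfStarsParent, hij]
  grind

lemma ncard_neighborSet_starOfStars_none : ((starOfStars n).neighborSet none).ncard = n := by
  rw [neighborSet_starOfStars_none, Set.ncard_range_of_injective (fun a b h => by simpa using h),
    Nat.card_fin]

lemma ncard_neighborSet_starOfStars_hub (i : Fin n) :
    ((starOfStars n).neighborSet (some (i, i))).ncard = n := by
  rw [neighborSet_starOfStars_hub, Set.ncard_range_of_injective (fun a b h => by grind),
    Nat.card_fin]

lemma ncard_neighborSet_starOfStars_le (v : Option (Fin n × Fin n)) :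
    ((starOfStars n).neighborSet v).ncard ≤ n := by
  rcases v with _ | ⟨i, j⟩
  · exact ncard_neighborSet_starOfStars_none.le
  by_cases hij : i = j
  · subst hij
    exact (ncard_neighborSet_starOfStars_hub i).le
  · rw [neighborSet_starOfStars_leaf hij, Set.ncard_singleton]
    exact i.pos

lemma starOfStars_pathGraph_free :
    ¬ ∃ f : pathGraph 6 →g starOfStars n, Function.Injective f := by
  rintro ⟨f, hf⟩
  obtain ⟨u, v, p, hp, hlen⟩ := exists_isPath_of_injective_pathGraph_hom (k := 5) hf
  have := (isTree_starOfStars n).length_le_of_forall_dist_le dist_none_starOfStars_le hp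
  omega

end StarOfStars

lemma ncard_neighborSet_comap_equiv {W : Type*} (e : V ≃ W) (H : SimpleGraph W) (v : V) :
    ((H.comap e).neighborSet v).ncard = (H.neighborSet (e v)).ncard := by
  rw [← Set.ncard_image_of_injective _ (Iso.comap e H).injective]
  exact congrArg Set.ncard ((Iso.comap e H).image_neighborSet (v := v))

end SimpleGraph

open SimpleGraph

theorem stmt_13_general (n : ℕ) :
    (∀ (V : Type) [Fintype V] (T : SimpleGraph V), T.IsTree →
        (∀ v : V, (T.neighborSet v).ncard ≤ n) →
        (¬ ∃ f : pathGraph 6 →g T, Function.Injective f) →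
        Fintype.card V ≤ n ^ 2 + 1) ∧
    (∃ T : SimpleGraph (Fin (n ^ 2 + 1)), T.IsTree ∧
        (∀ v, (T.neighborSet v).ncard ≤ n) ∧
        (¬ ∃ f : pathGraph 6 →g T, Function.Injective f) ∧
        ∃ root, (T.neighborSet root).ncard = n ∧
          ∀ v ∈ T.neighborSet root, (T.neighborSet v).ncard = n) := by
  refine ⟨fun V _ T hT hdeg hfree => ?_, ?_⟩
  · have hlen ⦃u v : V⦄ (p : T.Walk u v) (hp : p.IsPath) : p.length ≤ 2 * 2 :=
      le_of_not_gt fun h => hfree (hp.exists_injective_pathGraph_hom h)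
    obtain ⟨c, hc⟩ := hT.exists_forall_dist_le hlen
    exact hT.connected.card_le_of_forall_dist_le_two hdeg hc
  · let e : Fin (n ^ 2 + 1) ≃ Option (Fin n × Fin n) := Fintype.equivOfCardEq (by simp [sq])
    let φ : (starOfStars n).comap e ≃g starOfStars n := Iso.comap e _
    refine ⟨(starOfStars n).comap e, φ.isTree_iff.mpr (isTree_starOfStars n), fun v => ?_,
      fun ⟨f, hf⟩ => starOfStars_pathGraph_free ⟨φ.toHom.comp f, φ.injective.comp hf⟩,
      e.symm none, ?_, fun v hv => ?_⟩
    · rw [ncard_neighborSet_comap_equiv]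
      exact ncard_neighborSet_starOfStars_le _
    · rw [ncard_neighborSet_comap_equiv, e.apply_symm_apply, ncard_neighborSet_starOfStars_none]
    · rw [ncard_neighborSet_comap_equiv]
      have : e v ∈ (starOfStars n).neighborSet none := by simpa using hv
      rw [neighborSet_starOfStars_none] at this
      obtain ⟨i, hi⟩ := this
      rw [← hi, ncard_neighborSet_starOfStars_hub]

theorem stmt_13 (n : ℕ) (hn : 2 ≤ n) :
    (∀ (V : Type) [Fintype V] (T : SimpleGraph V), T.IsTree →
        (∀ v : V, (T.neighborSet v).ncard ≤ n) →
        (¬ ∃ f : pathGraph 6 →g T, Function.Injective f) →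
        Fintype.card V ≤ n ^ 2 + 1) ∧
    (∃ T : SimpleGraph (Fin (n ^ 2 + 1)), T.IsTree ∧
        (∀ v, (T.neighborSet v).ncard ≤ n) ∧
        (¬ ∃ f : pathGraph 6 →g T, Function.Injective f) ∧
        ∃ root, (T.neighborSet root).ncard = n ∧
          ∀ v ∈ T.neighborSet root, (T.neighborSet v).ncard = n) :=
  stmt_13_general n
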